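/- Let α ∈ (0,1) and h̄ < 0. The test ψ(w) := 1 if h̄ < w ≤ 0 and ψ(w) := α otherwise (i.e., if w > 0 or w ≤ h̄) satisfies ∫ψ dμ_0 = α and ∫ψ dμ_{h̄} = 1 − (1 − α)·e^{h̄/λ}; thus it attains the Neyman–Pearson power Π(h̄) = 1 − (1 − α)·e^{h̄/λ} for testing μ_0 against μ_{h̄} at level α. -/

import Mathlib

/-!
The test is `α + (1 - α) 𝟙_(h̄, 0]`, so its integral under a probability measure `μ` is
`α + (1 - α) μ (h̄, 0]`. The interval `(h̄, 0]` is `μ_0`-null, while the tail formula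
`μ_h (a, ∞) = e^{-(a - h)/λ}` for `a ≥ h` gives it `μ_{h̄}`-mass `1 - e^{h̄/λ}`.
-/

open MeasureTheory Real

noncomputable section

attribute [local instance] Classical.propDecidable

/-- The exponential distribution with scale `lam` shifted to start at `h`:
the measure on `ℝ` with Lebesgue density `w ↦ lam⁻¹ e^{−(w−h)/lam} 𝟙{w > h}`. -/
def expShift (lam h : ℝ) : Measure ℝ :=
  (volume : Measure ℝ).withDensity fun w =>
    ENNReal.ofReal (lam⁻¹ * exp (-(w - h) / lam) * if h < w then 1 else 0)

open Set Filter Topology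

lemma hasDerivAt_neg_exp_neg_sub_div (lam h w : ℝ) :
    HasDerivAt (fun w => -exp (-(w - h) / lam)) (lam⁻¹ * exp (-(w - h) / lam)) w :=
  (((hasDerivAt_id' w).sub_const h).fun_neg.div_const lam).exp.fun_neg.congr_deriv (by ring)

lemma tendsto_neg_exp_neg_sub_div_atTop {lam : ℝ} (hlam : 0 < lam) (h : ℝ) :
    Tendsto (fun w => -exp (-(w - h) / lam)) atTop (𝓝 0) := by
  have : Tendsto (fun w => -(w - h) / lam) atTop atBot :=
    (tendsto_neg_atTop_atBot.comp
      (tendsto_atTop_add_const_right atTop (-h) tendsto_id)).atBot_div_const hlam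
  simpa using (tendsto_exp_atBot.comp this).neg

lemma integrableOn_exp_neg_sub_div_Ioi {lam : ℝ} (hlam : 0 < lam) (h a : ℝ) :
    IntegrableOn (fun w => lam⁻¹ * exp (-(w - h) / lam)) (Ioi a) :=
  integrableOn_Ioi_deriv_of_nonneg' (fun w _ => hasDerivAt_neg_exp_neg_sub_div lam h w)
    (fun _ _ => by positivity) (tendsto_neg_exp_neg_sub_div_atTop hlam h)

lemma integral_exp_neg_sub_div_Ioi {lam : ℝ} (hlam : 0 < lam) (h a : ℝ) :
    ∫ w in Ioi a, lam⁻¹ * exp (-(w - h) / lam) = exp (-(a - h) / lam) := by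
  rw [integral_Ioi_of_hasDerivAt_of_nonneg' (fun w _ => hasDerivAt_neg_exp_neg_sub_div lam h w)
    (fun _ _ => by positivity) (tendsto_neg_exp_neg_sub_div_atTop hlam h)]
  ring

lemma expShift_Iic_self (lam h : ℝ) : expShift lam h (Iic h) = 0 := by
  rw [expShift, withDensity_apply _ measurableSet_Iic]
  refine (setLIntegral_congr_fun measurableSet_Iic fun w hw => ?_).trans lintegral_zero
  simp [not_lt.2 (mem_Iic.1 hw)]

lemma expShift_Ioi {lam h a : ℝ} (hlam : 0 < lam) (hha : h ≤ a) :
    expShift lam h (Ioi a) = ENNReal.ofReal (exp (-(a - h) / lam)) := by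
  rw [expShift, withDensity_apply _ measurableSet_Ioi,
    setLIntegral_congr_fun (g := fun w => ENNReal.ofReal (lam⁻¹ * exp (-(w - h) / lam)))
      measurableSet_Ioi fun w hw => by rw [if_pos (hha.trans_lt hw), mul_one],
    ← ofReal_integral_eq_lintegral_ofReal (integrableOn_exp_neg_sub_div_Ioi hlam h a)
      (ae_of_all _ fun _ => by positivity),
    integral_exp_neg_sub_div_Ioi hlam]

lemma isProbabilityMeasure_expShift {lam : ℝ} (hlam : 0 < lam) (h : ℝ) :
    IsProbabilityMeasure (expShift lam h) := by
  constructor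
  rw [← Iic_union_Ioi (a := h), measure_union (Iic_disjoint_Ioi le_rfl) measurableSet_Ioi,
    expShift_Iic_self, expShift_Ioi hlam le_rfl]
  simp

lemma expShift_real_Ioc_of_le {lam a b : ℝ} (h : ℝ) (hbh : b ≤ h) :
    (expShift lam h).real (Ioc a b) = 0 := by
  rw [measureReal_def, measure_mono_null (Ioc_subset_Iic_self.trans (Iic_subset_Iic.2 hbh))
    (expShift_Iic_self lam h), ENNReal.toReal_zero]

lemma expShift_real_Ioc {lam h a b : ℝ} (hlam : 0 < lam) (hha : h ≤ a) (hab : a ≤ b) :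
    (expShift lam h).real (Ioc a b) = exp (-(a - h) / lam) - exp (-(b - h) / lam) := by
  have := isProbabilityMeasure_expShift hlam h
  rw [← Ioi_sdiff_Ioi, measureReal_sdiff (Ioi_subset_Ioi hab) measurableSet_Ioi, measureReal_def,
    measureReal_def, expShift_Ioi hlam hha, expShift_Ioi hlam (hha.trans hab),
    ENNReal.toReal_ofReal (exp_nonneg _), ENNReal.toReal_ofReal (exp_nonneg _)]

lemma integral_const_add_indicator_const {Ω : Type*} [MeasurableSpace Ω] (μ : Measure Ω)
    [IsProbabilityMeasure μ] {s : Set Ω} (hs : MeasurableSet s) (c d : ℝ) :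
    ∫ ω, c + s.indicator (fun _ => d) ω ∂μ = c + d * μ.real s := by
  rw [integral_add (integrable_const c) ((integrable_const d).indicator hs),
    integral_indicator_const d hs, integral_const, probReal_univ, smul_eq_mul, smul_eq_mul,
    one_mul, mul_comm]

theorem np_test_neg_general (lam α hb : ℝ) (hlam : 0 < lam)
    (hhb : hb < 0) :
    ∫ w, (if hb < w ∧ w ≤ 0 then (1 : ℝ) else α) ∂ expShift lam 0 = α ∧
    ∫ w, (if hb < w ∧ w ≤ 0 then (1 : ℝ) else α) ∂ expShift lam hb =
      1 - (1 - α) * exp (hb / lam) := by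
  have htest : (fun w => if hb < w ∧ w ≤ 0 then (1 : ℝ) else α) =
      fun w => α + (Ioc hb 0).indicator (fun _ => 1 - α) w := by
    ext w
    by_cases hw : hb < w ∧ w ≤ 0 <;> simp [indicator, hw]
  have := isProbabilityMeasure_expShift hlam 0
  have := isProbabilityMeasure_expShift hlam hb
  rw [htest, integral_const_add_indicator_const _ measurableSet_Ioc,
    integral_const_add_indicator_const _ measurableSet_Ioc, expShift_real_Ioc_of_le 0 le_rfl,
    expShift_real_Ioc hlam le_rfl hhb.le]
  refine ⟨by ring, ?_⟩
  rw [sub_self, neg_zero, zero_div, exp_zero, zero_sub, neg_neg]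
  ring

/-- The Neyman–Pearson test of `μ_0` against `μ_{h̄}`, `h̄ < 0`: it has size `α`
and attains power `1 − (1 − α) e^{h̄/λ}`. -/
theorem np_test_neg (lam α hb : ℝ) (hlam : 0 < lam) (hα : α ∈ Set.Ioo (0 : ℝ) 1)
    (hhb : hb < 0) :
    ∫ w, (if hb < w ∧ w ≤ 0 then (1 : ℝ) else α) ∂ expShift lam 0 = α ∧
    ∫ w, (if hb < w ∧ w ≤ 0 then (1 : ℝ) else α) ∂ expShift lam hb =
      1 - (1 - α) * exp (hb / lam) :=
  np_test_neg_general lam α hb hlam hhb
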